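/- Let E_0 ⊆ … ⊆ E_k be sets of effects and let vis_i, ar_i, st_i (0 ≤ i ≤ k) be binary relations on effects such that each of the three families satisfies: the step-i relation is contained in E_i × E_i, and the step-(i+1) relation extends the step-i relation only by pairs whose second component lies in ε_i = E_{i+1} \ E_i (with ε_i disjoint from E_i). If the final triple (vis_k, ar_k, st_k) satisfies strict seriality Ψ_ser — i.e., Ψ_rc (∀ η1 η2 η3, st_k η1 η2 ∧ vis_k η1 η3 → vis_k η2 η3), Ψ_rr (∀ η1 η2 η3, st_k η1 η2 ∧ vis_k η3 η1 → vis_k η3 η2), and Ψ_lin (ar_k ⊆ vis_k) — then for every 0 ≤ i ≤ k the intermediate triple (vis_i, ar_i, st_i) satisfies Ψ_ser. -/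

import Mathlib

/-!
Between step `i` and the final step `k` a relation only gains pairs whose target is an effect
created after step `i`. Hence each step-`i` relation is exactly the final one with targets
restricted to `Es i`, and all three clauses of strict seriality survive restricting the targets
of `vis`, `ar` and `st` to a common set.
-/

/-- Strict seriality `Ψ_ser`: the conjunction of read committed `Ψ_rc`,
repeatable read `Ψ_rr`, and linearizability `Ψ_lin`. -/
def strictlySerial {E : Type*} (vis ar st : E → E → Prop) : Prop :=
  (∀ η1 η2 η3, st η1 η2 → vis η1 η3 → vis η2 η3) ∧
  (∀ η1 η2 η3, st η1 η2 → vis η3 η1 → vis η3 η2) ∧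
  (∀ η1 η2, ar η1 η2 → vis η1 η2)

/-- A family of relations `R i` (one per execution step) is a growing family
over the effect sets `Es i` up to step `k`: each `R i` is contained in
`Es i × Es i`, and `R (i+1)` extends `R i` only by pairs whose second
component is one of the fresh effects in `Es (i+1) \ Es i`. -/
def growingFamily {E : Type*} (k : ℕ) (Es : ℕ → Set E) (R : ℕ → E → E → Prop) : Prop :=
  (∀ i ≤ k, ∀ η η', R i η η' → η ∈ Es i ∧ η' ∈ Es i) ∧
  (∀ i < k, ∀ η η', R i η η' → R (i + 1) η η') ∧
  (∀ i < k, ∀ η η', R (i + 1) η η' → R i η η' ∨ η' ∈ Es (i + 1) \ Es i)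

theorem strictlySerial.restrict_targets {E : Type*} {vis ar st : E → E → Prop}
    (h : strictlySerial vis ar st) (S : Set E) :
    strictlySerial (fun a b => vis a b ∧ b ∈ S) (fun a b => ar a b ∧ b ∈ S)
      (fun a b => st a b ∧ b ∈ S) := by
  obtain ⟨hrc, hrr, hlin⟩ := h
  exact ⟨fun a b c hab hac => ⟨hrc a b c hab.1 hac.1, hac.2⟩,
    fun a b c hab hca => ⟨hrr a b c hab.1 hca.1, hab.2⟩,
    fun a b hab => ⟨hlin a b hab.1, hab.2⟩⟩

theorem monotoneOn_Iic_of_subset_succ {E : Type*} {k : ℕ} {Es : ℕ → Set E}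
    (hEs : ∀ i < k, Es i ⊆ Es (i + 1)) : MonotoneOn Es (Set.Iic k) :=
  monotoneOn_of_le_succ Set.ordConnected_Iic fun i _ _ hi => hEs i (Order.succ_le_iff.mp hi)

theorem growingFamily.apply_iff {E : Type*} {k : ℕ} {Es : ℕ → Set E} {R : ℕ → E → E → Prop}
    (hEs : ∀ i < k, Es i ⊆ Es (i + 1)) (h : growingFamily k Es R) {i j : ℕ} (hij : i ≤ j)
    (hjk : j ≤ k) {a b : E} : R i a b ↔ R j a b ∧ b ∈ Es i := by
  induction j, hij using Nat.le_induction with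
  | base => exact ⟨fun hR => ⟨hR, (h.1 i hjk a b hR).2⟩, And.left⟩
  | succ j hij ih =>
    have hj : j < k := hjk
    rw [ih hj.le]
    refine ⟨fun hR => ⟨h.2.1 j hj a b hR.1, hR.2⟩, fun ⟨hR, hb⟩ => ⟨?_, hb⟩⟩
    have hbj : b ∈ Es j := monotoneOn_Iic_of_subset_succ hEs
      (Set.mem_Iic.mpr (hij.trans hj.le)) (Set.mem_Iic.mpr hj.le) hij hb
    exact (h.2.2 j hj a b hR).resolve_right fun hfresh => hfresh.2 hbj

theorem strictlySerial_of_final_general {E : Type*} (k : ℕ) (Es : ℕ → Set E)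
    (vis ar st : ℕ → E → E → Prop)
    (hEmono : ∀ i < k, Es i ⊆ Es (i + 1))
    (hvis : growingFamily k Es vis)
    (har : growingFamily k Es ar)
    (hst : growingFamily k Es st)
    (hser : strictlySerial (vis k) (ar k) (st k)) :
    ∀ i ≤ k, strictlySerial (vis i) (ar i) (st i) := by
  intro i hik
  have restrict {R : ℕ → E → E → Prop} (hR : growingFamily k Es R) :
      R i = fun a b => R k a b ∧ b ∈ Es i :=
    funext₂ fun _ _ => propext (hR.apply_iff hEmono hik le_rfl)
  rw [restrict hvis, restrict har, restrict hst]
  exact hser.restrict_targets (Es i)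

/-- If the final system state of an execution satisfies strict seriality,
then so does every intermediate system state. -/
theorem strictlySerial_of_final {E : Type*} (k : ℕ) (Es : ℕ → Set E)
    (vis ar st : ℕ → E → E → Prop)
    (hEmono : ∀ i < k, Es i ⊆ Es (i + 1))
    (hdisj : ∀ i < k, Disjoint (Es (i + 1) \ Es i) (Es i))
    (hvis : growingFamily k Es vis)
    (har : growingFamily k Es ar)
    (hst : growingFamily k Es st)
    (hser : strictlySerial (vis k) (ar k) (st k)) :
    ∀ i ≤ k, strictlySerial (vis i) (ar i) (st i) :=
  strictlySerial_of_final_general k Es vis ar st hEmono hvis har hst hser
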